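/- arXiv:2009.08228 — 8 statements merged into one kernel-verified Lean document; each statement's English description precedes it below -/
import Mathlib

section
/- Let X be a type, let Z and Y be nonempty finite sets, let ψ : Z → Y, and let r : X × Z → ℝ and q : X × Y → ℝ satisfy (i) r(x,z) ≤ q(x, ψ(z)) for all x ∈ X and z ∈ Z, and (ii) for every y ∈ Y there exists z ∈ Z such that r(x,z) ≥ q(x,y) for all x ∈ X. Then for every horizon T ≥ 1, every sequence x_1, …, x_T in X and every sequence z_1, …, z_T in Z, one has max_{y ∈ Y} Σ_{t=1}^T q(x_t, y) − Σ_{t=1}^T q(x_t, ψ(z_t)) ≤ max_{z ∈ Z} Σ_{t=1}^T r(x_t, z) − Σ_{t=1}^T r(x_t, z_t). -/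
/-- Abstract regret-comparison lemma: if the virtual reward `r` lower-bounds the physical
reward `q` through the map `ψ`, and every physical action is dominated by some virtual action,
then the physical regret is bounded by the virtual regret. -/
theorem stmt0 {X Z Y : Type*} [Fintype Z] [Fintype Y] [Nonempty Z] [Nonempty Y]
    (ψ : Z → Y) (r : X × Z → ℝ) (q : X × Y → ℝ)
    (h1 : ∀ x z, r (x, z) ≤ q (x, ψ z))
    (h2 : ∀ y : Y, ∃ z : Z, ∀ x, r (x, z) ≥ q (x, y))
    (T : ℕ) (hT : 1 ≤ T) (x : Fin T → X) (z : Fin T → Z) :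
    (Finset.univ.sup' Finset.univ_nonempty fun y : Y => ∑ t, q (x t, y)) -
        ∑ t, q (x t, ψ (z t)) ≤
      (Finset.univ.sup' Finset.univ_nonempty fun z' : Z => ∑ t, r (x t, z')) -
        ∑ t, r (x t, z t) := by
  have hA : (Finset.univ.sup' Finset.univ_nonempty fun y : Y => ∑ t, q (x t, y)) ≤
      (Finset.univ.sup' Finset.univ_nonempty fun z' : Z => ∑ t, r (x t, z')) := by
    apply Finset.sup'_le
    intro y _
    obtain ⟨z', hz'⟩ := h2 y
    calc ∑ t, q (x t, y) ≤ ∑ t, r (x t, z') := Finset.sum_le_sum fun t _ => hz' (x t)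
      _ ≤ _ := Finset.le_sup' (fun z' : Z => ∑ t, r (x t, z')) (Finset.mem_univ z')
  have hB : ∑ t, r (x t, z t) ≤ ∑ t, q (x t, ψ (z t)) :=
    Finset.sum_le_sum fun t _ => h1 (x t) (z t)
  linarith
end

section
/- Let Z be a nonempty finite subset of ℝ^K, let γ be distributed according to the standard Gaussian product measure on ℝ^K (each coordinate i.i.d. N(0,1)), and for η ≥ 0 and x ∈ ℝ^K define the potential Φ_η(x) = E_γ[ max_{z ∈ Z} ⟨z, x + ηγ⟩ ]. Then for all 0 ≤ η ≤ η′ and every x ∈ ℝ^K, Φ_{η′}(x) − Φ_η(x) ≤ (η′ − η) · E_γ[ max_{z ∈ Z} ⟨z, γ⟩ ]. -/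
open MeasureTheory ProbabilityTheory

/-- The standard Gaussian product measure on `Fin K → ℝ` (each coordinate i.i.d. `N(0,1)`). -/
noncomputable def stdGaussianPi (K : ℕ) : Measure (Fin K → ℝ) :=
  Measure.pi fun _ : Fin K => gaussianReal 0 1

lemma integrable_id_gaussianReal : Integrable (fun x : ℝ => x) (gaussianReal 0 1) := by
  rw [gaussianReal_of_var_ne_zero 0 one_ne_zero,
    integrable_withDensity_iff (measurable_gaussianPDF 0 1)
      (ae_of_all _ fun x => ENNReal.ofReal_lt_top)]
  have h : Integrable (fun x : ℝ => x * gaussianPDFReal 0 1 x) volume := by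
    have h2 : Integrable (fun x : ℝ => (Real.sqrt (2 * Real.pi))⁻¹ *
        (x * Real.exp (-(1/2) * x ^ 2))) volume :=
      (integrable_mul_exp_neg_mul_sq (by norm_num)).const_mul _
    refine h2.congr (ae_of_all _ fun x => ?_)
    simp only [gaussianPDFReal]
    rw [show -((x - 0) ^ 2) / (2 * ((1:NNReal):ℝ)) = -(1/2:ℝ) * x ^ 2 by push_cast; ring]
    rw [show (2 * Real.pi * ((1:NNReal):ℝ)) = 2 * Real.pi by push_cast; ring]
    ring
  refine h.congr (ae_of_all _ fun x => ?_)
  simp only [gaussianPDF, ENNReal.toReal_ofReal (gaussianPDFReal_nonneg 0 1 x)]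

lemma map_eval_stdGaussianPi {K : ℕ} (i : Fin K) :
    (stdGaussianPi K).map (fun γ => γ i) = gaussianReal 0 1 := by
  refine Measure.ext fun s hs => ?_
  rw [stdGaussianPi, Measure.map_apply (measurable_pi_apply i) hs]
  have h : (fun γ : Fin K → ℝ => γ i) ⁻¹' s =
      Set.pi Set.univ (Function.update (fun _ : Fin K => (Set.univ : Set ℝ)) i s) :=
    Set.eval_preimage
  rw [h, Measure.pi_pi]
  rw [Finset.prod_eq_single_of_mem i (Finset.mem_univ i)]
  · rw [Function.update_self]
  · intro j _ hj
    rw [Function.update_of_ne hj]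
    simp

lemma integrable_eval_stdGaussianPi {K : ℕ} (i : Fin K) :
    Integrable (fun γ : Fin K → ℝ => γ i) (stdGaussianPi K) := by
  exact (MeasurePreserving.integrable_comp
    (⟨measurable_pi_apply i, map_eval_stdGaussianPi i⟩ :
      MeasurePreserving (fun γ : Fin K → ℝ => γ i) (stdGaussianPi K) (gaussianReal 0 1))
    aestronglyMeasurable_id).mpr integrable_id_gaussianReal

lemma integrable_finset_sup' {α ι : Type*} [MeasurableSpace α] {μ : Measure α}
    {s : Finset ι} (hs : s.Nonempty) {f : ι → α → ℝ}
    (hf : ∀ i ∈ s, Integrable (f i) μ) :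
    Integrable (fun a => s.sup' hs fun i => f i a) μ := by
  induction hs using Finset.Nonempty.cons_induction with
  | singleton i =>
    simp only [Finset.sup'_singleton]
    exact hf i (Finset.mem_singleton_self i)
  | cons i s his hs ih =>
    simp only [Finset.sup'_cons hs]
    exact (hf i (by simp)).sup (ih fun j hj => hf j (Finset.mem_cons_of_mem hj))

instance (K : ℕ) : IsProbabilityMeasure (stdGaussianPi K) :=
  inferInstanceAs (IsProbabilityMeasure (Measure.pi _))

lemma integrable_lin_stdGaussianPi {K : ℕ} (z x : Fin K → ℝ) (η : ℝ) :
    Integrable (fun γ : Fin K → ℝ => ∑ k, z k * (x k + η * γ k)) (stdGaussianPi K) := by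
  have h : Integrable (fun γ : Fin K → ℝ => ∑ k, (z k * x k + z k * η * γ k))
      (stdGaussianPi K) := by
    refine integrable_finset_sum _ fun k _ => ?_
    exact (integrable_const _).add ((integrable_eval_stdGaussianPi k).const_mul _)
  refine h.congr (ae_of_all _ fun γ => ?_)
  exact Finset.sum_congr rfl fun k _ => by ring

lemma integrable_lin0_stdGaussianPi {K : ℕ} (z : Fin K → ℝ) :
    Integrable (fun γ : Fin K → ℝ => ∑ k, z k * γ k) (stdGaussianPi K) := by
  have h := integrable_lin_stdGaussianPi z (fun _ => 0) 1
  refine h.congr (ae_of_all _ fun γ => ?_)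
  exact Finset.sum_congr rfl fun k _ => by ring

/-- Monotonicity of the FTPL potential in the learning rate: for `0 ≤ η ≤ η′`,
`Φ_{η′}(x) − Φ_η(x) ≤ (η′ − η) · G(Z)`, where `G(Z)` is the Gaussian complexity of `Z`. -/
theorem stmt5 {K : ℕ} (Z : Finset (Fin K → ℝ)) (hZ : Z.Nonempty)
    (Φ : ℝ → (Fin K → ℝ) → ℝ)
    (hΦ : ∀ η x, Φ η x =
      ∫ γ : Fin K → ℝ, (Z.sup' hZ fun z => ∑ k, z k * (x k + η * γ k)) ∂(stdGaussianPi K))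
    (η η' : ℝ) (hη : 0 ≤ η) (hη' : η ≤ η') (x : Fin K → ℝ) :
    Φ η' x - Φ η x ≤ (η' - η) *
      ∫ γ : Fin K → ℝ, (Z.sup' hZ fun z => ∑ k, z k * γ k) ∂(stdGaussianPi K) := by
  have hF : ∀ η : ℝ, Integrable
      (fun γ : Fin K → ℝ => Z.sup' hZ fun z => ∑ k, z k * (x k + η * γ k))
      (stdGaussianPi K) := fun η =>
    integrable_finset_sup' hZ fun z _ => integrable_lin_stdGaussianPi z x η
  have hG : Integrable (fun γ : Fin K → ℝ => Z.sup' hZ fun z => ∑ k, z k * γ k)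
      (stdGaussianPi K) :=
    integrable_finset_sup' hZ fun z _ => integrable_lin0_stdGaussianPi z
  have hpt : ∀ γ : Fin K → ℝ,
      (Z.sup' hZ fun z => ∑ k, z k * (x k + η' * γ k)) ≤
      (Z.sup' hZ fun z => ∑ k, z k * (x k + η * γ k)) +
        (η' - η) * (Z.sup' hZ fun z => ∑ k, z k * γ k) := by
    intro γ
    refine Finset.sup'_le _ _ fun z hz => ?_
    have h1 : ∑ k, z k * (x k + η' * γ k) =
        (∑ k, z k * (x k + η * γ k)) + (η' - η) * ∑ k, z k * γ k := by
      rw [Finset.mul_sum, ← Finset.sum_add_distrib]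
      exact Finset.sum_congr rfl fun k _ => by ring
    rw [h1]
    exact add_le_add (Finset.le_sup' (fun z => ∑ k, z k * (x k + η * γ k)) hz)
      (mul_le_mul_of_nonneg_left (Finset.le_sup' (fun z => ∑ k, z k * γ k) hz) (sub_nonneg.2 hη'))
  rw [hΦ, hΦ, sub_le_iff_le_add]
  calc ∫ γ : Fin K → ℝ, (Z.sup' hZ fun z => ∑ k, z k * (x k + η' * γ k)) ∂(stdGaussianPi K)
      ≤ ∫ γ : Fin K → ℝ, ((Z.sup' hZ fun z => ∑ k, z k * (x k + η * γ k)) +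
          (η' - η) * (Z.sup' hZ fun z => ∑ k, z k * γ k)) ∂(stdGaussianPi K) :=
        integral_mono (hF η') ((hF η).add (hG.const_mul _)) hpt
    _ = (∫ γ : Fin K → ℝ, (Z.sup' hZ fun z => ∑ k, z k * (x k + η * γ k)) ∂(stdGaussianPi K)) +
          (η' - η) * ∫ γ : Fin K → ℝ, (Z.sup' hZ fun z => ∑ k, z k * γ k) ∂(stdGaussianPi K) := by
        rw [integral_add (hF η) (hG.const_mul _), integral_const_mul]
    _ = _ := by ring
end

section
/- Let Δ ≥ 1 be an integer, let S be a nonempty finite set with |S| ≤ Δ, and let y : S → [0,1]. Then min(1, Σ_{j∈S} y_j) ≥ 1 − Π_{j∈S}(1 − y_j) ≥ (1 − (1 − 1/Δ)^Δ) · min(1, Σ_{j∈S} y_j). -/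
/-!
Write `s = ∑ y_j` and `P = ∏ (1 - y_j)`. The upper bound is `P ≥ 0` together with the
Weierstrass product inequality `P ≥ 1 - s`. For the lower bound, padding `S` with `Δ - |S|`
factors equal to `1` and applying AM–GM gives `P ≤ (1 - s/Δ)^Δ`. The function
`g t = 1 - (1 - t/Δ)^Δ` is concave with `g 0 = 0`, so `g t ≥ t · g 1` on `[0, 1]`, and it is
increasing on `[1, Δ]`, so `g t ≥ g 1` there.
-/

open Finset

theorem Finset.one_sub_sum_le_prod_one_sub {ι R : Type*} [CommRing R] [PartialOrder R]
    [IsOrderedRing R] (s : Finset ι) (y : ι → R) (h0 : ∀ i ∈ s, 0 ≤ y i)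
    (h1 : ∀ i ∈ s, y i ≤ 1) : 1 - ∑ i ∈ s, y i ≤ ∏ i ∈ s, (1 - y i) := by
  classical
  induction s using Finset.induction_on with
  | empty => simp
  | insert a s ha ih =>
    rw [forall_mem_insert] at h0 h1
    rw [sum_insert ha, prod_insert ha]
    have hsum : 0 ≤ ∑ i ∈ s, y i := sum_nonneg h0.2
    calc 1 - (y a + ∑ i ∈ s, y i)
        ≤ 1 - (y a + ∑ i ∈ s, y i) + y a * ∑ i ∈ s, y i :=
          le_add_of_nonneg_right (mul_nonneg h0.1 hsum)
      _ = (1 - y a) * (1 - ∑ i ∈ s, y i) := by ring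
      _ ≤ (1 - y a) * ∏ i ∈ s, (1 - y i) :=
          mul_le_mul_of_nonneg_left (ih h0.2 h1.2) (sub_nonneg.2 h1.1)

theorem Real.prod_le_mean_pow_card {ι : Type*} {s : Finset ι} (hs : s.Nonempty) {f : ι → ℝ}
    (hf : ∀ i ∈ s, 0 ≤ f i) : ∏ i ∈ s, f i ≤ ((∑ i ∈ s, f i) / #s) ^ #s := by
  have hgm := Real.geom_mean_le_arith_mean s (fun _ ↦ 1) f (fun _ _ ↦ zero_le_one)
    (by simpa using hs) hf
  simp only [Real.rpow_one, sum_const, nsmul_eq_mul, mul_one, one_mul] at hgm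
  calc ∏ i ∈ s, f i = ((∏ i ∈ s, f i) ^ (#s : ℝ)⁻¹) ^ #s :=
        (Real.rpow_inv_natCast_pow (prod_nonneg hf) hs.card_pos.ne').symm
    _ ≤ ((∑ i ∈ s, f i) / #s) ^ #s :=
        pow_le_pow_left₀ (Real.rpow_nonneg (prod_nonneg hf) _) hgm _

theorem Real.prod_le_pow_of_card_le {ι : Type*} {s : Finset ι} {n : ℕ} (hn : 0 < n)
    (hsn : #s ≤ n) {f : ι → ℝ} (hf : ∀ i ∈ s, 0 ≤ f i) :
    ∏ i ∈ s, f i ≤ ((∑ i ∈ s, f i + (n - #s)) / n) ^ n := by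
  set t := s.disjSum (univ : Finset (Fin (n - #s)))
  have ht : #t = n := by simp [t]; omega
  have hpad := Real.prod_le_mean_pow_card (s := t) (f := Sum.elim f 1)
    (card_pos.1 (ht.symm ▸ hn)) (by simpa [t] using hf)
  simpa [t, ht, Nat.cast_sub hsn] using hpad

theorem Real.one_sub_pow_mul_min_one_le {n : ℕ} (hn : 0 < n) {t : ℝ} (ht : 0 ≤ t)
    (htn : t ≤ n) : (1 - (1 - 1 / n) ^ n) * min 1 t ≤ 1 - (1 - t / n) ^ n := by
  have hn' : (0 : ℝ) < n := Nat.cast_pos.2 hn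
  have h1n : 1 / (n : ℝ) ≤ 1 := div_le_one_of_le₀ (Nat.one_le_cast.2 hn) hn'.le
  rcases le_total t 1 with ht1 | ht1
  · have hconv := (convexOn_pow n).2 (Set.mem_Ici.2 zero_le_one)
      (Set.mem_Ici.2 (sub_nonneg.2 h1n)) (sub_nonneg.2 ht1) ht (sub_add_cancel 1 t)
    have hcomb : (1 - t) * 1 + t * (1 - 1 / n) = 1 - t / n := by ring
    simp only [smul_eq_mul, one_pow] at hconv
    rw [hcomb] at hconv
    rw [min_eq_right ht1]
    linarith
  · have hbase : 0 ≤ 1 - t / n := sub_nonneg.2 ((div_le_one hn').2 htn)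
    have hmono : (1 - t / n) ^ n ≤ (1 - 1 / n) ^ n :=
      pow_le_pow_left₀ hbase (by gcongr) n
    rw [min_eq_left ht1]
    linarith

theorem stmt6_general {J : Type*} (Δ : ℕ) (hΔ : 1 ≤ Δ) (S : Finset J)
    (hSΔ : S.card ≤ Δ) (y : J → ℝ) (hy0 : ∀ j ∈ S, 0 ≤ y j) (hy1 : ∀ j ∈ S, y j ≤ 1) :
    1 - ∏ j ∈ S, (1 - y j) ≤ min 1 (∑ j ∈ S, y j) ∧
      (1 - (1 - 1 / (Δ : ℝ)) ^ Δ) * min 1 (∑ j ∈ S, y j) ≤ 1 - ∏ j ∈ S, (1 - y j) := by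
  have hz : ∀ j ∈ S, 0 ≤ 1 - y j := fun j hj ↦ sub_nonneg.2 (hy1 j hj)
  have hsum : ∑ j ∈ S, y j ≤ Δ := by
    have := sum_le_card_nsmul S y 1 hy1
    rw [nsmul_one] at this
    exact this.trans (Nat.cast_le.2 hSΔ)
  have hpad : ∏ j ∈ S, (1 - y j) ≤ (1 - (∑ j ∈ S, y j) / Δ) ^ Δ := by
    convert Real.prod_le_pow_of_card_le hΔ hSΔ hz using 2
    rw [sum_sub_distrib, sum_const, nsmul_one]
    field_simp
    ring
  refine ⟨le_min (by linarith [prod_nonneg hz]) ?_, ?_⟩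
  · linarith [S.one_sub_sum_le_prod_one_sub y hy0 hy1]
  · linarith [Real.one_sub_pow_mul_min_one_le hΔ (sum_nonneg hy0) hsum]

/-- The Ageev–Sviridenko pointwise inequality: for `y : S → [0,1]` with `|S| ≤ Δ`,
`min(1, Σ y_j) ≥ 1 − Π(1 − y_j) ≥ (1 − (1 − 1/Δ)^Δ)·min(1, Σ y_j)`. -/
theorem stmt6 {J : Type*} (Δ : ℕ) (hΔ : 1 ≤ Δ) (S : Finset J) (hS : S.Nonempty)
    (hSΔ : S.card ≤ Δ) (y : J → ℝ) (hy0 : ∀ j ∈ S, 0 ≤ y j) (hy1 : ∀ j ∈ S, y j ≤ 1) :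
    1 - ∏ j ∈ S, (1 - y j) ≤ min 1 (∑ j ∈ S, y j) ∧
      (1 - (1 - 1 / (Δ : ℝ)) ^ Δ) * min 1 (∑ j ∈ S, y j) ≤ 1 - ∏ j ∈ S, (1 - y j) :=
  stmt6_general Δ hΔ S hSΔ y hy0 hy1
end

section
/- Let J and I be finite sets, let θ : I → ℝ with θ_i ≥ 0 for all i, and for each i ∈ I let S_i ⊆ J. Define φ : (J → ℝ) → ℝ by φ(y) = Σ_{i∈I} θ_i (1 − Π_{j∈S_i}(1 − y_j)). Let a, b ∈ J with a ≠ b be such that no i ∈ I satisfies both a ∈ S_i and b ∈ S_i. Then for every y : J → ℝ the map s ↦ φ(y + s(δ_a − δ_b)) is affine in s, i.e., there exist real numbers α, β such that φ(y + s(δ_a − δ_b)) = α + β·s for all s ∈ ℝ. -/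
private lemma prod_affine {J : Type*} [DecidableEq J] (y : J → ℝ)
    (a b : J) (hab : a ≠ b) (T : Finset J) (hT : ¬(a ∈ T ∧ b ∈ T)) :
    ∃ α β : ℝ, ∀ s : ℝ,
      (∏ j ∈ T, (1 - (y j + s * ((if j = a then (1 : ℝ) else 0) - (if j = b then (1 : ℝ) else 0)))))
        = α + β * s := by
  by_cases ha : a ∈ T
  · have hb : b ∉ T := fun hb => hT ⟨ha, hb⟩
    set C : ℝ := ∏ j ∈ T.erase a, (1 - y j) with hC
    refine ⟨(1 - y a) * C, -C, fun s => ?_⟩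
    rw [← Finset.mul_prod_erase _ _ ha]
    have hrest : (∏ j ∈ T.erase a,
        (1 - (y j + s * ((if j = a then (1 : ℝ) else 0) - (if j = b then (1 : ℝ) else 0))))) = C := by
      refine Finset.prod_congr rfl fun j hj => ?_
      have hja : j ≠ a := Finset.ne_of_mem_erase hj
      have hjb : j ≠ b := fun e => hb (e ▸ Finset.mem_of_mem_erase hj)
      simp [hja, hjb]
    rw [hrest]
    simp [hab]
    ring
  · by_cases hb : b ∈ T
    · set C : ℝ := ∏ j ∈ T.erase b, (1 - y j) with hC
      refine ⟨(1 - y b) * C, C, fun s => ?_⟩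
      rw [← Finset.mul_prod_erase _ _ hb]
      have hrest : (∏ j ∈ T.erase b,
          (1 - (y j + s * ((if j = a then (1 : ℝ) else 0) - (if j = b then (1 : ℝ) else 0))))) = C := by
        refine Finset.prod_congr rfl fun j hj => ?_
        have hjb : j ≠ b := Finset.ne_of_mem_erase hj
        have hja : j ≠ a := fun e => ha (e ▸ Finset.mem_of_mem_erase hj)
        simp [hja, hjb]
      rw [hrest]
      simp [hab.symm]
      ring
    · refine ⟨∏ j ∈ T, (1 - y j), 0, fun s => ?_⟩
      rw [mul_comm, mul_zero, add_zero]
      refine Finset.prod_congr rfl fun j hj => ?_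
      have hja : j ≠ a := fun e => ha (e ▸ hj)
      have hjb : j ≠ b := fun e => hb (e ▸ hj)
      simp [hja, hjb]

/-- Linearity of the surrogate objective along a Pipage direction: if no index set `S i`
contains both `a` and `b`, then `s ↦ φ(y + s(δ_a − δ_b))` is affine. -/
theorem stmt8 {J I : Type*} [Fintype I] [DecidableEq J]
    (θ : I → ℝ) (hθ : ∀ i, 0 ≤ θ i) (S : I → Finset J)
    (a b : J) (hab : a ≠ b) (h : ∀ i, ¬(a ∈ S i ∧ b ∈ S i))
    (y : J → ℝ) :
    ∃ α β : ℝ, ∀ s : ℝ,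
      (∑ i, θ i * (1 - ∏ j ∈ S i,
          (1 - (y j + s * ((if j = a then (1 : ℝ) else 0) - (if j = b then (1 : ℝ) else 0)))))) =
        α + β * s := by
  choose α β hαβ using fun i => prod_affine y a b hab (S i) (h i)
  refine ⟨∑ i, θ i * (1 - α i), ∑ i, -(θ i * β i), fun s => ?_⟩
  rw [Finset.sum_mul, ← Finset.sum_add_distrib]
  refine Finset.sum_congr rfl fun i _ => ?_
  rw [hαβ i s]
  ring
end

section
/- Let J and I be finite sets, let N ≥ 1, let C_j ∈ ℕ for each j ∈ J, let D_i ⊆ J for each i ∈ I, and let θ : I × [N] → ℝ with θ(i,f) ≥ 0 for all i, f. Define the polytope P = { y : J × [N] → [0,1] : Σ_{f∈[N]} y(j,f) ≤ C_j for every j ∈ J } and the surrogate objective φ(y) = Σ_{i∈I} Σ_{f∈[N]} θ(i,f) (1 − Π_{j∈D_i}(1 − y(j,f))). Then for every y ∈ P there exists ŷ ∈ P taking values in {0,1} such that φ(ŷ) ≥ φ(y). -/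
/-!
With all rows but one fixed, `φ = cacheObjective θ D` is an affine function of the remaining
row `y j` with nonnegative slopes: the entry `y j f` occurs only in the `f`-th summands, at most
once in each product, and the cofactors `∏ (1 - y j' f)` are nonnegative because `y ≤ 1`. So it
suffices to round one row at a time, i.e. to show that a nonnegative linear functional `β`
attains its maximum over `{x ∈ [0,1]^F | ∑ x ≤ C}` at a `{0,1}`-point. Take the indicator of a
set `S` of `min C |F|` slots with maximal total weight; an exchange argument gives a threshold
`τ ≥ 0` separating `β` on `S` from `β` off `S`, and then
`∑ β (1_S - x) = ∑ (β - τ) (1_S - x) + τ (|S| - ∑ x) ≥ 0` termwise.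
-/

open Finset Function

section

variable {I J F : Type*}

section RowRounding

variable [Fintype F]

def cappedBox (C : ℕ) : Set (F → ℝ) :=
  {x | (∀ f, 0 ≤ x f ∧ x f ≤ 1) ∧ ∑ f, x f ≤ C}

variable [DecidableEq F] {β x : F → ℝ}

theorem sum_mul_le_sum_mul_indicator_of_threshold {S : Finset F} {τ : ℝ} (hτ : 0 ≤ τ)
    (hS : ∀ f ∈ S, τ ≤ β f) (hSc : ∀ f ∉ S, β f ≤ τ) (hx : ∀ f, 0 ≤ x f ∧ x f ≤ 1)
    (hsum : ∑ f, x f ≤ #S) :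
    ∑ f, β f * x f ≤ ∑ f, β f * (if f ∈ S then 1 else 0) := by
  set xS : F → ℝ := fun f => if f ∈ S then 1 else 0
  have hterm : ∀ f, 0 ≤ (β f - τ) * (xS f - x f) := by
    intro f
    by_cases hf : f ∈ S
    · simp only [xS, if_pos hf]
      exact mul_nonneg (by linarith [hS f hf]) (by linarith [hx f])
    · simp only [xS, if_neg hf]
      exact mul_nonneg_of_nonpos_of_nonpos (by linarith [hSc f hf]) (by linarith [hx f])
  have hxS : ∑ f, xS f = #S := by simp [xS]
  have hsplit : ∑ f, β f * xS f - ∑ f, β f * x f =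
      ∑ f, (β f - τ) * (xS f - x f) + τ * (∑ f, xS f - ∑ f, x f) := by
    simp only [mul_sub, sub_mul, sum_sub_distrib, mul_sum]
    ring
  have hτsum : 0 ≤ τ * (∑ f, xS f - ∑ f, x f) := mul_nonneg hτ (by linarith)
  linarith [sum_nonneg fun f (_ : f ∈ univ) => hterm f]

theorem le_of_isMaxOn_sum_powersetCard {S : Finset F}
    (hmax : ∀ T ∈ powersetCard #S univ, ∑ f ∈ T, β f ≤ ∑ f ∈ S, β f) {s t : F}
    (hs : s ∈ S) (ht : t ∉ S) : β t ≤ β s := by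
  have ht' : t ∉ S.erase s := fun h => ht (mem_of_mem_erase h)
  have hT : insert t (S.erase s) ∈ powersetCard #S univ := by
    rw [mem_powersetCard, card_insert_of_notMem ht', card_erase_of_mem hs]
    exact ⟨subset_univ _, Nat.sub_add_cancel (card_pos.2 ⟨s, hs⟩)⟩
  have := hmax _ hT
  rw [sum_insert ht', ← add_sum_erase S β hs] at this
  linarith

theorem exists_threshold {S : Finset F} (hβ : ∀ f, 0 ≤ β f)
    (hex : ∀ s ∈ S, ∀ t ∉ S, β t ≤ β s) :
    ∃ τ, 0 ≤ τ ∧ (∀ f ∈ S, τ ≤ β f) ∧ ∀ f ∉ S, β f ≤ τ := by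
  by_cases h : Sᶜ.Nonempty
  · obtain ⟨t, ht⟩ := h
    refine ⟨Sᶜ.sup' ⟨t, ht⟩ β, (hβ t).trans (le_sup' β ht), fun f hf => ?_,
      fun f hf => le_sup' β (mem_compl.2 hf)⟩
    exact sup'_le _ _ fun t ht => hex f hf t (mem_compl.1 ht)
  · exact ⟨0, le_rfl, fun f _ => hβ f, fun f hf => absurd ⟨f, mem_compl.2 hf⟩ h⟩

theorem exists_integral_mem_cappedBox_sum_mul_le {C : ℕ} (hβ : ∀ f, 0 ≤ β f)
    (hx : x ∈ cappedBox C) :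
    ∃ xh ∈ cappedBox C, (∀ f, xh f = 0 ∨ xh f = 1) ∧ ∑ f, β f * x f ≤ ∑ f, β f * xh f := by
  obtain ⟨hx01, hxC⟩ := hx
  obtain ⟨S, hSk, hmax⟩ := (powersetCard (min C (Fintype.card F)) univ).exists_max_image
    (fun T => ∑ f ∈ T, β f) (powersetCard_nonempty.2 (by simp))
  have hS : #S = min C (Fintype.card F) := (mem_powersetCard.1 hSk).2
  obtain ⟨τ, hτ, hτS, hτSc⟩ :=
    exists_threshold hβ fun s hs t ht => le_of_isMaxOn_sum_powersetCard (hS ▸ hmax) hs ht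
  have hsum : ∑ f, x f ≤ #S := by
    have hcard : ∑ f, x f ≤ Fintype.card F := by
      simpa using sum_le_sum fun f (_ : f ∈ univ) => (hx01 f).2
    rw [hS, Nat.cast_min]
    exact le_min hxC hcard
  refine ⟨fun f => if f ∈ S then 1 else 0, ⟨fun f => by by_cases hf : f ∈ S <;> simp [hf], ?_⟩,
    fun f => by by_cases hf : f ∈ S <;> simp [hf],
    sum_mul_le_sum_mul_indicator_of_threshold hτ hτS hτSc hx01 hsum⟩
  simp [hS]

end RowRounding

theorem prod_one_sub_update [DecidableEq J] (s : Finset J) (y : J → F → ℝ) (j : J) (x : F → ℝ)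
    (f : F) :
    ∏ j' ∈ s, (1 - update y j x j' f) = ∏ j' ∈ s, (1 - y j' f) -
      (if j ∈ s then ∏ j' ∈ s.erase j, (1 - y j' f) else 0) * (x f - y j f) := by
  have hoff : ∀ j' ∈ s.erase j, 1 - update y j x j' f = 1 - y j' f := fun j' hj' => by
    rw [update_of_ne (ne_of_mem_erase hj')]
  split_ifs with hj
  · rw [← mul_prod_erase s _ hj, ← mul_prod_erase s _ hj, prod_congr rfl hoff, update_self]
    ring
  · rw [erase_eq_of_notMem hj] at hoff
    rw [prod_congr rfl hoff]
    ring

section Objective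

variable [Fintype I] (θ : I → F → ℝ) (D : I → Finset J)

def rowWeight [DecidableEq J] (y : J → F → ℝ) (j : J) (f : F) : ℝ :=
  ∑ i, if j ∈ D i then θ i f * ∏ j' ∈ (D i).erase j, (1 - y j' f) else 0

theorem rowWeight_nonneg [DecidableEq J] (hθ : ∀ i f, 0 ≤ θ i f) {y : J → F → ℝ}
    (hy : ∀ j f, y j f ≤ 1) (j : J) (f : F) : 0 ≤ rowWeight θ D y j f :=
  sum_nonneg fun i _ => by
    split_ifs
    exacts [mul_nonneg (hθ i f) (prod_nonneg fun j' _ => sub_nonneg.2 (hy j' f)), le_rfl]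

variable [Fintype F]

def cacheObjective (y : J → F → ℝ) : ℝ :=
  ∑ i, ∑ f, θ i f * (1 - ∏ j ∈ D i, (1 - y j f))

theorem cacheObjective_update [DecidableEq J] (y : J → F → ℝ) (j : J) (x : F → ℝ) :
    cacheObjective θ D (update y j x) =
      cacheObjective θ D y + ∑ f, rowWeight θ D y j f * (x f - y j f) := by
  simp only [cacheObjective, rowWeight, prod_one_sub_update, sum_mul]
  rw [sum_comm (s := (univ : Finset F)) (t := (univ : Finset I))]
  rw [← sum_add_distrib]
  refine sum_congr rfl fun i _ => ?_
  rw [← sum_add_distrib]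
  refine sum_congr rfl fun f _ => ?_
  split_ifs <;> ring

end Objective

theorem exists_integral_cacheObjective_le [Fintype I] [Fintype J] [Fintype F]
    (θ : I → F → ℝ) (D : I → Finset J) (hθ : ∀ i f, 0 ≤ θ i f) (C : J → ℕ) {y : J → F → ℝ}
    (hy : ∀ j, y j ∈ cappedBox (C j)) :
    ∃ yh : J → F → ℝ, (∀ j, yh j ∈ cappedBox (C j)) ∧ (∀ j f, yh j f = 0 ∨ yh j f = 1) ∧
      cacheObjective θ D y ≤ cacheObjective θ D yh := by
  classical
  suffices ∀ s : Finset J, ∃ yh : J → F → ℝ, (∀ j, yh j ∈ cappedBox (C j)) ∧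
      (∀ j ∈ s, ∀ f, yh j f = 0 ∨ yh j f = 1) ∧ cacheObjective θ D y ≤ cacheObjective θ D yh by
    obtain ⟨yh, hbox, hint, hle⟩ := this univ
    exact ⟨yh, hbox, fun j => hint j (mem_univ j), hle⟩
  intro s
  induction s using Finset.induction_on with
  | empty => exact ⟨y, hy, by simp, le_rfl⟩
  | insert j s _ ih =>
    obtain ⟨y', hbox, hint, hle⟩ := ih
    have hβ := rowWeight_nonneg θ D hθ (fun j f => ((hbox j).1 f).2) j
    obtain ⟨x, hxbox, hxint, hx⟩ := exists_integral_mem_cappedBox_sum_mul_le hβ (hbox j)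
    refine ⟨update y' j x, fun j' => ?_, fun j' hj' => ?_, ?_⟩
    · rcases eq_or_ne j' j with rfl | h
      · simpa using hxbox
      · simpa [update_of_ne h] using hbox j'
    · rcases eq_or_ne j' j with rfl | h
      · simpa using hxint
      · simpa [update_of_ne h] using hint j' (mem_of_mem_insert_of_ne hj' h)
    · have hgain : 0 ≤ ∑ f, rowWeight θ D y' j f * (x f - y' j f) := by
        simpa [mul_sub, sum_sub_distrib] using hx
      rw [cacheObjective_update]
      linarith

end

theorem stmt9_general {J I : Type*} [Fintype I] [Fintype J] (N : ℕ)
    (Ccap : J → ℕ) (D : I → Finset J) (θ : I → Fin N → ℝ)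
    (hθ : ∀ i f, 0 ≤ θ i f)
    (y : J → Fin N → ℝ) (hy0 : ∀ j f, 0 ≤ y j f) (hy1 : ∀ j f, y j f ≤ 1)
    (hyC : ∀ j, ∑ f, y j f ≤ (Ccap j : ℝ)) :
    ∃ yh : J → Fin N → ℝ,
      (∀ j f, yh j f = 0 ∨ yh j f = 1) ∧
      (∀ j f, 0 ≤ yh j f) ∧ (∀ j f, yh j f ≤ 1) ∧
      (∀ j, ∑ f, yh j f ≤ (Ccap j : ℝ)) ∧
      (∑ i, ∑ f, θ i f * (1 - ∏ j ∈ D i, (1 - y j f))) ≤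
        ∑ i, ∑ f, θ i f * (1 - ∏ j ∈ D i, (1 - yh j f)) := by
  obtain ⟨yh, hbox, hint, hle⟩ := exists_integral_cacheObjective_le θ D hθ Ccap
    (y := y) fun j => ⟨fun f => ⟨hy0 j f, hy1 j f⟩, hyC j⟩
  exact ⟨yh, hint, fun j f => ((hbox j).1 f).1, fun j f => ((hbox j).1 f).2,
    fun j => (hbox j).2, hle⟩

/-- Correctness of Pipage rounding: any fractional point of the cache-capacity polytope can be
rounded to a `{0,1}`-valued point of the polytope without decreasing the multilinear surrogate
objective `φ`. -/
theorem stmt9 {J I : Type*} [Fintype I] [Fintype J] (N : ℕ) (hN : 1 ≤ N)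
    (Ccap : J → ℕ) (D : I → Finset J) (θ : I → Fin N → ℝ)
    (hθ : ∀ i f, 0 ≤ θ i f)
    (y : J → Fin N → ℝ) (hy0 : ∀ j f, 0 ≤ y j f) (hy1 : ∀ j f, y j f ≤ 1)
    (hyC : ∀ j, ∑ f, y j f ≤ (Ccap j : ℝ)) :
    ∃ yh : J → Fin N → ℝ,
      (∀ j f, yh j f = 0 ∨ yh j f = 1) ∧
      (∀ j f, 0 ≤ yh j f) ∧ (∀ j f, yh j f ≤ 1) ∧
      (∀ j, ∑ f, yh j f ≤ (Ccap j : ℝ)) ∧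
      (∑ i, ∑ f, θ i f * (1 - ∏ j ∈ D i, (1 - y j f))) ≤
        ∑ i, ∑ f, θ i f * (1 - ∏ j ∈ D i, (1 - yh j f)) :=
  stmt9_general N Ccap D θ hθ y hy0 hy1 hyC
end

section
/- Let N ≥ 1 and C ≥ 1 be integers, and let p : {1,…,N} → ℝ satisfy 0 ≤ p_j ≤ 1 for all j and Σ_{j=1}^N p_j = C. Define Π_0 = 0 and Π_j = Π_{j−1} + p_j for 1 ≤ j ≤ N. For u ∈ [0,1), define S(u) = { j ∈ {1,…,N} : there exists i ∈ {0,1,…,C−1} with Π_{j−1} ≤ u + i < Π_j }. Then |S(u)| = C for every u ∈ [0,1). -/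
/-- Cardinality correctness of Madow's systematic sampling scheme: for `u ∈ [0,1)`, exactly `C`
elements `j ∈ {1,…,N}` satisfy `Π_{j−1} ≤ u + i < Π_j` for some `i ∈ {0,…,C−1}`. -/
theorem stmt11 (N C : ℕ) (hN : 1 ≤ N) (hC : 1 ≤ C) (p : ℕ → ℝ)
    (hp0 : ∀ j ∈ Finset.Icc 1 N, 0 ≤ p j) (hp1 : ∀ j ∈ Finset.Icc 1 N, p j ≤ 1)
    (hpsum : ∑ j ∈ Finset.Icc 1 N, p j = (C : ℝ))
    (u : ℝ) (hu0 : 0 ≤ u) (hu1 : u < 1) :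
    ({j : ℕ | j ∈ Finset.Icc 1 N ∧ ∃ i : ℕ, i < C ∧
        (∑ k ∈ Finset.Icc 1 (j - 1), p k) ≤ u + i ∧ u + i < ∑ k ∈ Finset.Icc 1 j, p k} :
      Set ℕ).ncard = C := by
  classical
  set Q : ℕ → ℝ := fun j => ∑ k ∈ Finset.Icc 1 j, p k with hQ
  have hQ0 : Q 0 = 0 := by simp [hQ]
  have hmono : ∀ a b : ℕ, a ≤ b → b ≤ N → Q a ≤ Q b := by
    intro a b hab hbN
    apply Finset.sum_le_sum_of_subset_of_nonneg
    · exact Finset.Icc_subset_Icc_right hab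
    · intro k hk _
      exact hp0 k (Finset.Icc_subset_Icc_right hbN hk)
  have hQstep : ∀ j : ℕ, 1 ≤ j → Q j = Q (j - 1) + p j := by
    intro j hj
    obtain ⟨m, rfl⟩ : ∃ m, j = m + 1 := ⟨j - 1, (Nat.succ_pred_eq_of_pos hj).symm⟩
    simp [hQ, Finset.sum_Icc_succ_top (Nat.le_add_left 1 m)]
  -- for each i < C, the set of j with u + i < Q j is nonempty
  have hTne : ∀ i : ℕ, i < C →
      ((Finset.Icc 1 N).filter (fun j => u + i < Q j)).Nonempty := by
    intro i hi
    refine ⟨N, Finset.mem_filter.2 ⟨Finset.mem_Icc.2 ⟨hN, le_rfl⟩, ?_⟩⟩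
    have : Q N = (C : ℝ) := hpsum
    rw [this]
    have : (i : ℝ) + 1 ≤ C := by exact_mod_cast hi
    linarith
  set f : ℕ → ℕ := fun i =>
    if h : i < C then ((Finset.Icc 1 N).filter (fun j => u + i < Q j)).min' (hTne i h)
    else 0 with hf
  have hfspec : ∀ i : ℕ, i < C → f i ∈ Finset.Icc 1 N ∧
      Q (f i - 1) ≤ u + i ∧ u + i < Q (f i) := by
    intro i hi
    have hmem := ((Finset.Icc 1 N).filter (fun j => u + i < Q j)).min'_mem (hTne i hi)
    rw [Finset.mem_filter] at hmem
    have hfi : f i = ((Finset.Icc 1 N).filter (fun j => u + i < Q j)).min' (hTne i hi) := by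
      simp [hf, hi]
    rw [← hfi] at hmem
    refine ⟨hmem.1, ?_, hmem.2⟩
    by_contra hlt
    push_neg at hlt
    have h1 : 1 ≤ f i := (Finset.mem_Icc.1 hmem.1).1
    have h1' : 1 ≤ f i - 1 := by
      by_contra h
      push_neg at h
      interval_cases h' : (f i - 1)
      rw [hQ0] at hlt
      have : (0:ℝ) ≤ u + i := by positivity
      linarith
    have hmem' : f i - 1 ∈ (Finset.Icc 1 N).filter (fun j => u + i < Q j) := by
      refine Finset.mem_filter.2 ⟨Finset.mem_Icc.2 ⟨h1', ?_⟩, hlt⟩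
      exact le_trans (Nat.sub_le _ _) (Finset.mem_Icc.1 hmem.1).2
    have := Finset.min'_le _ _ hmem'
    rw [← hfi] at this
    omega
  -- uniqueness
  have huniq : ∀ i : ℕ, i < C → ∀ j ∈ Finset.Icc 1 N,
      Q (j - 1) ≤ u + i → u + i < Q j → j = f i := by
    intro i hi j hjmem hle hlt
    obtain ⟨hf1, hfle, hflt⟩ := hfspec i hi
    have hfi : f i = ((Finset.Icc 1 N).filter (fun j => u + i < Q j)).min' (hTne i hi) := by
      simp [hf, hi]
    have hfle' : f i ≤ j := by
      rw [hfi]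
      exact Finset.min'_le _ _ (Finset.mem_filter.2 ⟨hjmem, hlt⟩)
    rcases Nat.lt_or_ge (f i) j with h | h
    · exfalso
      have : Q (f i) ≤ Q (j - 1) := by
        apply hmono
        · omega
        · exact le_trans (Nat.sub_le _ _) (Finset.mem_Icc.1 hjmem).2
      linarith
    · omega
  -- S is the image of range C under f
  have hSet : ({j : ℕ | j ∈ Finset.Icc 1 N ∧ ∃ i : ℕ, i < C ∧
        (∑ k ∈ Finset.Icc 1 (j - 1), p k) ≤ u + i ∧ u + i < ∑ k ∈ Finset.Icc 1 j, p k} :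
      Set ℕ) = ↑((Finset.range C).image f) := by
    ext j
    simp only [Set.mem_setOf_eq, Finset.coe_image, Set.mem_image, Finset.mem_coe,
      Finset.mem_range]
    constructor
    · rintro ⟨hjmem, i, hi, hle, hlt⟩
      exact ⟨i, hi, (huniq i hi j hjmem hle hlt).symm⟩
    · rintro ⟨i, hi, rfl⟩
      obtain ⟨h1, h2, h3⟩ := hfspec i hi
      exact ⟨h1, i, hi, h2, h3⟩
  rw [hSet, Set.ncard_coe_finset]
  rw [Finset.card_image_of_injOn, Finset.card_range]
  -- injectivity
  have key : ∀ i i' : ℕ, i < C → i' < C → i < i' → f i ≠ f i' := by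
    intro i i' hi hi' hlt hii
    obtain ⟨h1, h2, h3⟩ := hfspec i hi
    obtain ⟨h1', h2', h3'⟩ := hfspec i' hi'
    rw [hii] at h3 h2
    have hj1 : 1 ≤ f i' := (Finset.mem_Icc.1 h1').1
    have hstep := hQstep (f i') hj1
    have hp1' := hp1 (f i') h1'
    rw [← hii] at h2'
    have : (i' : ℝ) < i + 1 := by linarith
    have : (i' : ℕ) < i + 1 := by exact_mod_cast this
    omega
  intro i hi i' hi' hii
  simp only [Finset.coe_range, Set.mem_Iio] at hi hi'
  rcases lt_trichotomy i i' with h | h | h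
  · exact absurd hii (key i i' hi hi' h)
  · exact h
  · exact absurd hii.symm (key i' i hi' hi h)
end

section
/- Let N ≥ 1 and C ≥ 1 be integers, and let p : {1,…,N} → ℝ satisfy 0 ≤ p_j ≤ 1 for all j and Σ_{j=1}^N p_j = C. Define Π_0 = 0 and Π_j = Π_{j−1} + p_j for 1 ≤ j ≤ N. For u ∈ [0,1), define S(u) = { j ∈ {1,…,N} : there exists i ∈ {0,1,…,C−1} with Π_{j−1} ≤ u + i < Π_j }. Then for every j ∈ {1,…,N}, the Lebesgue measure of { u ∈ [0,1) : j ∈ S(u) } equals p_j; equivalently, if U is uniformly distributed on [0,1), then P(j ∈ S(U)) = p_j. -/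
open MeasureTheory Set Finset

lemma clamp_sum_aux (C : ℕ) : ∀ x : ℝ, 0 ≤ x → x ≤ C →
    ∑ i ∈ Finset.range C, min 1 (max 0 (x - i)) = x := by
  induction C with
  | zero => intro x h0 hC; simp at hC ⊢; linarith
  | succ n ih =>
    intro x h0 hC
    rw [Finset.sum_range_succ']
    by_cases hx : x ≤ 1
    · have hz : ∀ i ∈ Finset.range n, min 1 (max 0 (x - ((i : ℕ) + 1 : ℕ))) = 0 := by
        intro i _
        have hi : (0:ℝ) ≤ i := Nat.cast_nonneg i
        have hle : x - ((i : ℕ) + 1 : ℕ) ≤ 0 := by push_cast; linarith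
        rw [max_eq_left hle]
        simp
      rw [Finset.sum_congr rfl hz]
      simp [max_eq_right h0, min_eq_right hx]
    · push_neg at hx
      have h1 : (0:ℝ) ≤ x - 1 := by linarith
      have h2 : x - 1 ≤ n := by push_cast at hC ⊢; linarith
      have key := ih (x - 1) h1 h2
      have hcong : ∀ i ∈ Finset.range n, min 1 (max 0 (x - ((i : ℕ) + 1 : ℕ)))
          = min 1 (max 0 ((x - 1) - i)) := by
        intro i _; congr 2; push_cast; ring
      rw [Finset.sum_congr rfl hcong, key]
      have h3 : max 0 (x - ((0:ℕ):ℝ)) = x := by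
        rw [Nat.cast_zero, sub_zero]; exact max_eq_right h0
      rw [h3, min_eq_left hx.le]
      ring

/-- Marginal-inclusion correctness of Madow's systematic sampling scheme: for each
`j ∈ {1,…,N}`, the Lebesgue measure of the set of `u ∈ [0,1)` for which `j` is selected
(i.e. `Π_{j−1} ≤ u + i < Π_j` for some `i ∈ {0,…,C−1}`) equals `p j`. -/
theorem stmt12 (N C : ℕ) (hN : 1 ≤ N) (hC : 1 ≤ C) (p : ℕ → ℝ)
    (hp0 : ∀ j ∈ Finset.Icc 1 N, 0 ≤ p j) (hp1 : ∀ j ∈ Finset.Icc 1 N, p j ≤ 1)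
    (hpsum : ∑ j ∈ Finset.Icc 1 N, p j = (C : ℝ))
    (j : ℕ) (hj : j ∈ Finset.Icc 1 N) :
    MeasureTheory.volume {u : ℝ | u ∈ Set.Ico (0 : ℝ) 1 ∧ ∃ i : ℕ, i < C ∧
        (∑ k ∈ Finset.Icc 1 (j - 1), p k) ≤ u + i ∧ u + i < ∑ k ∈ Finset.Icc 1 j, p k} =
      ENNReal.ofReal (p j) := by
  obtain ⟨hj1, hjN⟩ := Finset.mem_Icc.mp hj
  set A := ∑ k ∈ Finset.Icc 1 (j - 1), p k with hA
  set B := ∑ k ∈ Finset.Icc 1 j, p k with hB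
  have hpj0 : 0 ≤ p j := hp0 j hj
  have hpj1 : p j ≤ 1 := hp1 j hj
  have hBA : B = A + p j := by
    rw [hA, hB]
    conv_lhs => rw [show j = (j - 1) + 1 from (Nat.sub_add_cancel hj1).symm]
    rw [Finset.sum_Icc_succ_top (by omega)]
    rw [Nat.sub_add_cancel hj1]
  have hA0 : 0 ≤ A := by
    apply Finset.sum_nonneg
    intro k hk
    exact hp0 k (Finset.mem_Icc.mpr ⟨(Finset.mem_Icc.mp hk).1,
      le_trans (Finset.mem_Icc.mp hk).2 (by omega)⟩)
  have hAB : A ≤ B := by linarith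
  have hBC : B ≤ C := by
    rw [← hpsum, hB]
    apply Finset.sum_le_sum_of_subset_of_nonneg
    · exact Finset.Icc_subset_Icc_right hjN
    · intro k hk _; exact hp0 k hk
  have hAC : A ≤ C := le_trans hAB hBC
  have hset : {u : ℝ | u ∈ Set.Ico (0 : ℝ) 1 ∧ ∃ i : ℕ, i < C ∧ A ≤ u + i ∧ u + i < B}
      = ⋃ i ∈ Finset.range C, Set.Ico (max 0 (A - (i:ℝ))) (min 1 (B - (i:ℝ))) := by
    ext u
    simp only [Set.mem_setOf_eq, Set.mem_Ico, Set.mem_iUnion, Finset.mem_range,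
      max_le_iff, lt_min_iff, exists_prop]
    constructor
    · rintro ⟨⟨hu0, hu1⟩, i, hiC, h1, h2⟩
      exact ⟨i, hiC, ⟨hu0, by linarith⟩, hu1, by linarith⟩
    · rintro ⟨i, hiC, ⟨hu0, h1⟩, hu1, h2⟩
      exact ⟨⟨hu0, hu1⟩, i, hiC, by linarith, by linarith⟩
  have hdisj : (↑(Finset.range C) : Set ℕ).PairwiseDisjoint
      (fun i : ℕ => Set.Ico (max 0 (A - (i:ℝ))) (min 1 (B - (i:ℝ)))) := by
    intro i _ i' _ hne
    simp only [Function.onFun, Set.disjoint_left]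
    intro u hu hu'
    simp only [Set.mem_Ico, max_le_iff, lt_min_iff] at hu hu'
    obtain ⟨⟨_, h1⟩, _, h2⟩ := hu
    obtain ⟨⟨_, h1'⟩, _, h2'⟩ := hu'
    rcases lt_or_gt_of_ne hne with h | h
    · have : (i:ℝ) + 1 ≤ i' := by exact_mod_cast h
      linarith
    · have : (i':ℝ) + 1 ≤ i := by exact_mod_cast h
      linarith
  rw [hset, measure_biUnion_finset hdisj (fun i _ => measurableSet_Ico)]
  have hterm : ∀ i ∈ Finset.range C,
      MeasureTheory.volume (Set.Ico (max 0 (A - (i:ℝ))) (min 1 (B - (i:ℝ))))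
        = ENNReal.ofReal (min 1 (max 0 (B - (i:ℝ))) - min 1 (max 0 (A - (i:ℝ)))) := by
    intro i _
    rw [Real.volume_Ico]
    by_cases hb : B - (i:ℝ) < 0
    · have ha : A - (i:ℝ) < 0 := by linarith
      have l : min 1 (B - (i:ℝ)) - max 0 (A - (i:ℝ)) ≤ 0 := by
        have h1 := min_le_right (1:ℝ) (B - (i:ℝ))
        have h2 := le_max_left (0:ℝ) (A - (i:ℝ))
        linarith
      have r : min 1 (max 0 (B - (i:ℝ))) - min 1 (max 0 (A - (i:ℝ))) ≤ 0 := by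
        rw [max_eq_left hb.le, max_eq_left ha.le]
        simp
      rw [ENNReal.ofReal_eq_zero.mpr l, ENNReal.ofReal_eq_zero.mpr r]
    · push_neg at hb
      by_cases ha : 1 < A - (i:ℝ)
      · have l : min 1 (B - (i:ℝ)) - max 0 (A - (i:ℝ)) ≤ 0 := by
          have h1 := min_le_left (1:ℝ) (B - (i:ℝ))
          have h2 := le_max_right (0:ℝ) (A - (i:ℝ))
          linarith
        have r : min 1 (max 0 (B - (i:ℝ))) - min 1 (max 0 (A - (i:ℝ))) ≤ 0 := by
          rw [max_eq_right (by linarith : (0:ℝ) ≤ A - (i:ℝ)), min_eq_left ha.le]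
          have := min_le_left (1:ℝ) (max 0 (B - (i:ℝ)))
          linarith
        rw [ENNReal.ofReal_eq_zero.mpr l, ENNReal.ofReal_eq_zero.mpr r]
      · push_neg at ha
        rw [max_eq_right hb, min_eq_right (max_le zero_le_one ha)]
  rw [Finset.sum_congr rfl hterm]
  have hnonneg : ∀ i ∈ Finset.range C,
      0 ≤ min 1 (max 0 (B - (i:ℝ))) - min 1 (max 0 (A - (i:ℝ))) := by
    intro i _
    have h1 : max 0 (A - (i:ℝ)) ≤ max 0 (B - (i:ℝ)) := max_le_max le_rfl (by linarith)
    have h2 := min_le_min (le_refl (1:ℝ)) h1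
    linarith
  rw [← ENNReal.ofReal_sum_of_nonneg hnonneg]
  congr 1
  rw [Finset.sum_sub_distrib, clamp_sum_aux C B (hA0.trans hAB) hBC,
    clamp_sum_aux C A hA0 hAC]
  linarith
end

section
/- Let (τ_k)_{k≥1} be a sequence of i.i.d. random variables on a probability space with τ_k > 0 almost surely, common mean E[τ_1] = 1/p for some p ∈ (0,∞), and finite fourth moment E[τ_1⁴] < ∞. Let S_k = τ_1 + ⋯ + τ_k and, for t ≥ 1, let N(t) = #{ k ≥ 1 : S_k ≤ t } be the associated renewal counting process. Then for every ε > 0, Σ_{t=1}^∞ P( |N(t)/t − p| ≥ ε ) < ∞. -/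
/-!
A count `N(T) ≥ m` means `S_m ≤ T`, so a deviation `|N(T)/T - p| ≥ δ` forces one of the two
partial sums `S_m` with `m ≈ (p ± δ) T` to deviate from its mean `m / p` by order `T`. For
i.i.d. centred summands with a finite fourth moment, `E[(S_m - m/p)^4] = O(m²)`, so Markov's
inequality bounds each such event by `O(T² / T⁴) = O(1 / T²)`, which is summable.
-/

open MeasureTheory ProbabilityTheory Finset
open scoped ENNReal

section Moments

variable {Ω : Type*} [MeasurableSpace Ω] {μ : Measure Ω}

theorem MeasureTheory.MemLp.integrable_pow_of_le [IsFiniteMeasure μ] {f : Ω → ℝ} {p n : ℕ}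
    (hf : MemLp f p μ) (hn : n ≤ p) : Integrable (fun ω => f ω ^ n) μ := by
  refine (hf.mono_exponent (mod_cast hn : (n : ℝ≥0∞) ≤ p)).integrable_norm_pow'.mono'
    (hf.aestronglyMeasurable.pow n) (ae_of_all _ fun ω => ?_)
  simp [norm_pow]

theorem MeasureTheory.memLp_of_integrable_abs_pow {f : Ω → ℝ} {n : ℕ} (hn : n ≠ 0)
    (hf : AEStronglyMeasurable f μ) (h : Integrable (fun ω => |f ω| ^ n) μ) :
    MemLp f n μ := by
  rw [← integrable_norm_rpow_iff hf (by simpa) (by simp)]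
  simpa using h

theorem MeasureTheory.measure_le_abs_le_integral_pow_div [IsFiniteMeasure μ] {f : Ω → ℝ}
    {n : ℕ} (hn : Even n) (hf : Integrable (fun ω => f ω ^ n) μ) {a : ℝ} (ha : 0 < a) :
    μ {ω | a ≤ |f ω|} ≤ ENNReal.ofReal ((∫ ω, f ω ^ n ∂μ) / a ^ n) := by
  have hsub : {ω | a ≤ |f ω|} ⊆ {ω | a ^ n ≤ f ω ^ n} := fun ω hω => by
    change a ^ n ≤ f ω ^ n
    simpa only [hn.pow_abs] using pow_le_pow_left₀ ha.le hω n
  have hmarkov := mul_meas_ge_le_integral_of_nonneg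
    (ae_of_all _ fun ω => hn.pow_nonneg (f ω)) hf (a ^ n)
  calc μ {ω | a ≤ |f ω|} ≤ μ {ω | a ^ n ≤ f ω ^ n} := measure_mono hsub
    _ = ENNReal.ofReal (μ.real {ω | a ^ n ≤ f ω ^ n}) :=
      (ofReal_measureReal (measure_ne_top _ _)).symm
    _ ≤ ENNReal.ofReal ((∫ ω, f ω ^ n ∂μ) / a ^ n) :=
      ENNReal.ofReal_le_ofReal ((le_div_iff₀' (by positivity)).mpr hmarkov)

theorem ProbabilityTheory.IndepFun.integral_add_pow [IsFiniteMeasure μ] {X Y : Ω → ℝ}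
    (hXY : IndepFun X Y μ) {n : ℕ} (hX : MemLp X n μ) (hY : MemLp Y n μ) :
    ∫ ω, (X ω + Y ω) ^ n ∂μ =
      ∑ k ∈ range (n + 1), (∫ ω, X ω ^ k ∂μ) * (∫ ω, Y ω ^ (n - k) ∂μ) * n.choose k := by
  have hpow (k l : ℕ) : IndepFun (fun ω => X ω ^ k) (fun ω => Y ω ^ l) μ :=
    hXY.comp (measurable_id.pow_const k) (measurable_id.pow_const l)
  simp_rw [add_pow]
  rw [integral_finsetSum]
  · refine sum_congr rfl fun k _ => ?_
    rw [integral_mul_const, ← (hpow k (n - k)).integral_mul_eq_mul_integral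
      (hX.aestronglyMeasurable.pow k) (hY.aestronglyMeasurable.pow (n - k))]
    rfl
  · intro k hk
    exact ((hpow k (n - k)).integrable_mul (hX.integrable_pow_of_le (by simp at hk; omega))
      (hY.integrable_pow_of_le (Nat.sub_le n k))).mul_const _

variable [IsProbabilityMeasure μ]

theorem ProbabilityTheory.iIndepFun.integral_sum_range_sq {Y : ℕ → Ω → ℝ}
    (hindep : iIndepFun Y μ) (hmeas : ∀ k, Measurable (Y k)) (hL2 : ∀ k, MemLp (Y k) 2 μ)
    (hzero : ∀ k, ∫ ω, Y k ω ∂μ = 0) {σ2 : ℝ} (h2 : ∀ k, ∫ ω, Y k ω ^ 2 ∂μ = σ2) (m : ℕ) :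
    ∫ ω, (∑ j ∈ range m, Y j ω) ^ 2 ∂μ = m * σ2 := by
  induction m with
  | zero => simp
  | succ m ih =>
    have hsum := (hindep.indepFun_sum_range_succ hmeas m).integral_add_pow (n := 2)
      (by simpa using memLp_finsetSum' _ fun j _ => hL2 j) (by simpa using hL2 m)
    simp only [Finset.sum_apply] at hsum
    simp_rw [sum_range_succ, hsum]
    simp only [Nat.reduceAdd, sum_range_succ, range_one, sum_singleton, pow_zero, integral_const,
      probReal_univ, smul_eq_mul, mul_one, tsub_zero, h2, one_mul, Nat.choose_zero_right,
      Nat.cast_one, pow_one, Nat.add_one_sub_one, hzero, mul_zero, Nat.choose_succ_self_right,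
      Nat.cast_ofNat, zero_mul, add_zero, ih, tsub_self, Nat.choose_self, Nat.cast_add]
    ring

theorem ProbabilityTheory.iIndepFun.integral_sum_range_pow_four {Y : ℕ → Ω → ℝ}
    (hindep : iIndepFun Y μ) (hmeas : ∀ k, Measurable (Y k)) (hL4 : ∀ k, MemLp (Y k) 4 μ)
    (hzero : ∀ k, ∫ ω, Y k ω ∂μ = 0) {σ2 σ4 : ℝ} (h2 : ∀ k, ∫ ω, Y k ω ^ 2 ∂μ = σ2)
    (h4 : ∀ k, ∫ ω, Y k ω ^ 4 ∂μ = σ4) (m : ℕ) :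
    ∫ ω, (∑ j ∈ range m, Y j ω) ^ 4 ∂μ = m * σ4 + 3 * m * (m - 1) * σ2 ^ 2 := by
  have hL2 k : MemLp (Y k) 2 μ := (hL4 k).mono_exponent (by norm_num)
  induction m with
  | zero => simp
  | succ m ih =>
    have hsum := (hindep.indepFun_sum_range_succ hmeas m).integral_add_pow (n := 4)
      (by simpa using memLp_finsetSum' _ fun j _ => hL4 j) (by simpa using hL4 m)
    have hmean : ∫ ω, ∑ j ∈ range m, Y j ω ∂μ = 0 := by
      rw [integral_finsetSum _ fun j _ => (hL4 j).integrable (by norm_num)]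
      simp [hzero]
    simp only [Finset.sum_apply] at hsum
    simp_rw [sum_range_succ, hsum]
    simp only [Nat.reduceAdd, sum_range_succ, range_one, sum_singleton, pow_zero, integral_const,
      probReal_univ, smul_eq_mul, mul_one, tsub_zero, h4, one_mul, Nat.choose, Nat.cast_one,
      pow_one, hmean, Nat.add_one_sub_one, zero_mul, add_zero, Nat.cast_ofNat,
      hindep.integral_sum_range_sq hmeas hL2 hzero h2, Nat.reduceSub, h2, hzero, mul_zero, ih,
      tsub_self, Nat.cast_add, add_sub_cancel_right]
    ring

theorem ProbabilityTheory.iIndepFun.exists_measure_le_abs_sum_range_sub_le {τ : ℕ → Ω → ℝ}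
    (hindep : iIndepFun τ μ) (hmeas : ∀ k, Measurable (τ k))
    (hident : ∀ k, IdentDistrib (τ k) (τ 0) μ μ) (hL4 : MemLp (τ 0) 4 μ) :
    ∃ K, 0 ≤ K ∧ ∀ (m : ℕ) (a : ℝ), 0 < a →
      μ {ω | a ≤ |∑ j ∈ range m, τ j ω - m * ∫ ω, τ 0 ω ∂μ|} ≤
        ENNReal.ofReal (K * m ^ 2 / a ^ 4) := by
  set c := ∫ ω, τ 0 ω ∂μ
  set Y : ℕ → Ω → ℝ := fun k ω => τ k ω - c
  have hτL4 k : MemLp (τ k) 4 μ := (hident k).symm.memLp_snd hL4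
  have hYident k : IdentDistrib (Y k) (Y 0) μ μ := (hident k).comp (measurable_id.sub_const c)
  have hYL4 k : MemLp (Y k) 4 μ := (hτL4 k).sub (memLp_const c)
  have hYzero k : ∫ ω, Y k ω ∂μ = 0 := by
    rw [integral_sub ((hτL4 k).integrable (by norm_num)) (integrable_const c),
      (hident k).integral_eq]
    simp [c]
  set σ2 := ∫ ω, Y 0 ω ^ 2 ∂μ
  set σ4 := ∫ ω, Y 0 ω ^ 4 ∂μ
  have hmoment (m : ℕ) :
      ∫ ω, (∑ j ∈ range m, Y j ω) ^ 4 ∂μ = m * σ4 + 3 * m * (m - 1) * σ2 ^ 2 :=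
    (hindep.comp (fun _ x => x - c) fun _ => measurable_id.sub_const c)
      |>.integral_sum_range_pow_four (fun k => (hmeas k).sub_const c) hYL4 hYzero
        (fun k => ((hYident k).comp (measurable_id.pow_const 2)).integral_eq)
        (fun k => ((hYident k).comp (measurable_id.pow_const 4)).integral_eq) m
  have hσ2 : 0 ≤ σ2 := integral_nonneg fun ω => by positivity
  have hσ4 : 0 ≤ σ4 := integral_nonneg fun ω => by positivity
  refine ⟨σ4 + 3 * σ2 ^ 2, by positivity, fun m a ha => ?_⟩
  have hcentre ω : ∑ j ∈ range m, τ j ω - m * c = ∑ j ∈ range m, Y j ω := by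
    simp [Y, sum_sub_distrib]
  simp only [hcentre]
  have hint : Integrable (fun ω => (∑ j ∈ range m, Y j ω) ^ 4) μ :=
    MemLp.integrable_pow_of_le (p := 4) (by simpa using memLp_finsetSum _ fun j _ => hYL4 j)
      le_rfl
  refine (measure_le_abs_le_integral_pow_div (by decide : Even 4) hint ha).trans
    (ENNReal.ofReal_le_ofReal (div_le_div_of_nonneg_right ?_ (by positivity)))
  rw [hmoment m]
  have hm : (m : ℝ) ≤ m ^ 2 := by exact_mod_cast Nat.le_self_pow two_ne_zero m
  nlinarith

theorem ProbabilityTheory.iIndepFun.exists_measure_le_mul_le_abs_sum_range_sub_le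
    {τ : ℕ → Ω → ℝ} (hindep : iIndepFun τ μ) (hmeas : ∀ k, Measurable (τ k))
    (hident : ∀ k, IdentDistrib (τ k) (τ 0) μ μ) (hL4 : MemLp (τ 0) 4 μ) {a : ℝ} (ha : 0 < a)
    (B : ℝ) :
    ∃ C, 0 ≤ C ∧ ∀ (m : ℕ) (T : ℝ), 0 < T → (m : ℝ) ≤ B * T →
      μ {ω | a * T ≤ |∑ j ∈ range m, τ j ω - m * ∫ ω, τ 0 ω ∂μ|} ≤
        ENNReal.ofReal (C / T ^ 2) := by
  obtain ⟨K, hK, hdev⟩ := hindep.exists_measure_le_abs_sum_range_sub_le hmeas hident hL4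
  refine ⟨K * B ^ 2 / a ^ 4, by positivity, fun m T hT hm => ?_⟩
  refine (hdev m _ (by positivity)).trans (ENNReal.ofReal_le_ofReal ?_)
  calc K * m ^ 2 / (a * T) ^ 4 ≤ K * (B * T) ^ 2 / (a * T) ^ 4 := by gcongr
    _ = K * B ^ 2 / a ^ 4 / T ^ 2 := by field_simp

end Moments

/-- With `s k = S_k`, this is `N(T) = #{k ≥ 1 : S_k ≤ T}`. `sSup` of an unbounded set of naturals
is `0`; for monotone `s` that junk case only arises when every `s k ≤ T`. -/
noncomputable def renewalCount (s : ℕ → ℝ) (T : ℝ) : ℕ := sSup {k : ℕ | 1 ≤ k ∧ s k ≤ T}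

theorem Monotone.le_or_lt_of_le_renewalCount_or_renewalCount_lt {s : ℕ → ℝ} (hs : Monotone s)
    {T : ℝ} {m₁ m₂ : ℕ} (hm₁ : 1 ≤ m₁) (hm₂ : 1 ≤ m₂)
    (h : m₁ ≤ renewalCount s T ∨ renewalCount s T < m₂) : s m₁ ≤ T ∨ T < s m₂ := by
  set A := {k : ℕ | 1 ≤ k ∧ s k ≤ T}
  by_cases hbdd : BddAbove A
  · rcases h with h | h
    · have hne : A.Nonempty := by
        by_contra hA
        rw [Set.not_nonempty_iff_eq_empty] at hA
        simp [renewalCount, A, hA] at h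
        omega
      exact Or.inl ((hs h).trans (Nat.sSup_mem hne hbdd).2)
    · refine Or.inr (lt_of_not_ge fun hle => ?_)
      exact (le_csSup hbdd ⟨hm₂, hle⟩).not_gt h
  · obtain ⟨k, hk, hm₁k⟩ := not_bddAbove_iff.mp hbdd m₁
    exact Or.inl ((hs hm₁k.le).trans hk.2)

theorem Monotone.le_or_lt_of_le_abs_renewalCount_div_sub {s : ℕ → ℝ} (hs : Monotone s)
    {T q δ : ℝ} (hT : 0 < T) (hqδ : 0 < q + δ) (h : δ ≤ |renewalCount s T / T - q|) :
    s ⌈(q + δ) * T⌉₊ ≤ T ∨ T < s (⌊(q - δ) * T⌋₊ + 1) := by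
  refine hs.le_or_lt_of_le_renewalCount_or_renewalCount_lt
    (Nat.one_le_ceil_iff.mpr (by positivity)) le_add_self ?_
  rcases le_abs'.mp h with h | h
  · right
    have : (renewalCount s T : ℝ) ≤ (q - δ) * T := by
      rw [← div_le_iff₀ hT]; linarith
    exact_mod_cast this.trans_lt (Nat.lt_floor_add_one _)
  · left
    exact Nat.ceil_le.mpr (by rw [← le_div_iff₀ hT]; linarith)

theorem Monotone.le_abs_sub_of_le_abs_renewalCount_div_sub {s : ℕ → ℝ} (hs : Monotone s)
    {T p δ : ℝ} (hp : 0 < p) (hδ : 0 < δ) (hδp : δ ≤ p) (hT : 2 ≤ δ * T)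
    (h : δ ≤ |renewalCount s T / T - p|) :
    δ / (2 * p) * T ≤ |s ⌈(p + δ) * T⌉₊ - ⌈(p + δ) * T⌉₊ * (1 / p)| ∨
      δ / (2 * p) * T ≤
        |s (⌊(p - δ) * T⌋₊ + 1) - ((⌊(p - δ) * T⌋₊ + 1 : ℕ) : ℝ) * (1 / p)| := by
  have hT0 : 0 < T := pos_of_mul_pos_right (by linarith) hδ.le
  have habs (x y : ℝ) : |x - y * (1 / p)| = |p * x - y| / p := by
    rw [eq_div_iff hp.ne', ← abs_of_pos hp, ← abs_mul, abs_of_pos hp]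
    congr 1
    field_simp
  have hscale : δ / (2 * p) * T = δ * T / 2 / p := by field_simp
  rw [habs, habs, hscale]
  rcases hs.le_or_lt_of_le_abs_renewalCount_div_sub hT0 (by linarith) h with hle | hlt
  · refine Or.inl (div_le_div_of_nonneg_right ((neg_le_abs _).trans' ?_) hp.le)
    nlinarith [Nat.le_ceil ((p + δ) * T)]
  · refine Or.inr (div_le_div_of_nonneg_right ((le_abs_self _).trans' ?_) hp.le)
    have := Nat.floor_le (show 0 ≤ (p - δ) * T by nlinarith)
    push_cast
    nlinarith

section Renewal

variable {Ω : Type*} [MeasurableSpace Ω] {μ : Measure Ω} {τ : ℕ → Ω → ℝ}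

theorem measure_le_abs_renewalCount_div_sub_le_add (hpos : ∀ k, ∀ᵐ ω ∂μ, 0 < τ k ω)
    {T p δ : ℝ} (hp : 0 < p) (hδ : 0 < δ) (hδp : δ ≤ p) (hT : 2 ≤ δ * T) :
    μ {ω | δ ≤ |renewalCount (fun k => ∑ j ∈ range k, τ j ω) T / T - p|} ≤
      μ {ω | δ / (2 * p) * T ≤
          |∑ j ∈ range ⌈(p + δ) * T⌉₊, τ j ω - ⌈(p + δ) * T⌉₊ * (1 / p)|} +
        μ {ω | δ / (2 * p) * T ≤ |∑ j ∈ range (⌊(p - δ) * T⌋₊ + 1), τ j ω -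
          ((⌊(p - δ) * T⌋₊ + 1 : ℕ) : ℝ) * (1 / p)|} := by
  have hmono : ∀ᵐ ω ∂μ, Monotone fun k => ∑ j ∈ range k, τ j ω := by
    filter_upwards [ae_all_iff.mpr hpos] with ω hω
    exact fun a b hab => sum_le_sum_of_subset_of_nonneg (range_subset_range.mpr hab)
      fun i _ _ => (hω i).le
  refine (measure_mono_ae <| hmono.mono fun ω hω hbad => ?_).trans (measure_union_le _ _)
  exact hω.le_abs_sub_of_le_abs_renewalCount_div_sub hp hδ hδp hT hbad

variable [IsProbabilityMeasure μ]

theorem exists_measure_le_abs_renewalCount_div_sub_le (hindep : iIndepFun τ μ)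
    (hmeas : ∀ k, Measurable (τ k)) (hident : ∀ k, IdentDistrib (τ k) (τ 0) μ μ)
    (hpos : ∀ k, ∀ᵐ ω ∂μ, 0 < τ k ω) {p : ℝ} (hp : 0 < p) (hmean : ∫ ω, τ 0 ω ∂μ = 1 / p)
    (hL4 : MemLp (τ 0) 4 μ) {ε : ℝ} (hε : 0 < ε) :
    ∃ C, ∀ T : ℝ, 1 ≤ T →
      μ {ω | ε ≤ |renewalCount (fun k => ∑ j ∈ range k, τ j ω) T / T - p|} ≤
        ENNReal.ofReal (C / T ^ 2) := by
  set δ := min ε p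
  have hδ : 0 < δ := lt_min hε hp
  have hδp : δ ≤ p := min_le_right _ _
  obtain ⟨C₀, hC₀, hdev⟩ := hindep.exists_measure_le_mul_le_abs_sum_range_sub_le hmeas hident
    hL4 (a := δ / (2 * p)) (by positivity) (2 * p + 1)
  rw [hmean] at hdev
  refine ⟨(2 / δ) ^ 2 + 2 * C₀, fun T hT => ?_⟩
  have hT0 : 0 < T := by linarith
  rcases lt_or_ge (δ * T) 2 with hsmall | hlarge
  · refine prob_le_one.trans (ENNReal.one_le_ofReal.mpr ?_)
    rw [le_div_iff₀ (by positivity)]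
    have : T ^ 2 ≤ (2 / δ) ^ 2 := pow_le_pow_left₀ hT0.le (by rw [le_div_iff₀ hδ]; linarith) 2
    linarith
  have hm₁ : (⌈(p + δ) * T⌉₊ : ℝ) ≤ (2 * p + 1) * T :=
    (Nat.ceil_lt_add_one (by positivity)).le.trans (by nlinarith)
  have hm₂ : ((⌊(p - δ) * T⌋₊ + 1 : ℕ) : ℝ) ≤ (2 * p + 1) * T := by
    push_cast
    nlinarith [Nat.floor_le (show 0 ≤ (p - δ) * T by nlinarith)]
  calc μ {ω | ε ≤ |renewalCount (fun k => ∑ j ∈ range k, τ j ω) T / T - p|}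
      ≤ μ {ω | δ ≤ |renewalCount (fun k => ∑ j ∈ range k, τ j ω) T / T - p|} :=
        measure_mono fun ω (hω : ε ≤ _) => show δ ≤ _ from (min_le_left _ _).trans hω
    _ ≤ ENNReal.ofReal (C₀ / T ^ 2) + ENNReal.ofReal (C₀ / T ^ 2) :=
        (measure_le_abs_renewalCount_div_sub_le_add hpos hp hδ hδp hlarge).trans
          (add_le_add (hdev _ T hT0 hm₁) (hdev _ T hT0 hm₂))
    _ ≤ ENNReal.ofReal (((2 / δ) ^ 2 + 2 * C₀) / T ^ 2) := by
        rw [← ENNReal.ofReal_add (by positivity) (by positivity), ← add_div]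
        exact ENNReal.ofReal_le_ofReal
          (div_le_div_of_nonneg_right (by linarith [sq_nonneg (2 / δ)]) (by positivity))

end Renewal

theorem ENNReal.tsum_ne_top_of_le_ofReal_div_sq {f : ℕ → ℝ≥0∞} {C : ℝ}
    (h : ∀ t : ℕ, f t ≤ ENNReal.ofReal (C / ((t : ℝ) + 1) ^ 2)) : ∑' t, f t ≠ ⊤ := by
  have hsum : Summable fun t : ℕ => 1 / ((t : ℝ) + 1) ^ 2 := by
    simpa [Nat.cast_add_one] using
      (summable_nat_add_iff 1).mpr (Real.summable_one_div_nat_pow.mpr (by norm_num : 1 < 2))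
  refine ne_top_of_le_ne_top ?_ (ENNReal.tsum_le_tsum h)
  simpa only [mul_one_div] using (hsum.mul_left C).tsum_ofReal_ne_top

/-- Renewal processes satisfy the summable concentration condition: if the i.i.d. renewal
intervals are a.s. positive with mean `1/p` and finite fourth moment, then for every `ε > 0`,
`Σ_{t=1}^∞ P(|N(t)/t − p| ≥ ε) < ∞`, where `N(t) = #{k ≥ 1 : S_k ≤ t}` is the renewal counting
process with `S_k = τ_1 + ⋯ + τ_k`. -/
theorem stmt14 {Ω : Type*} [MeasurableSpace Ω] (μ : Measure Ω) [IsProbabilityMeasure μ]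
    (τ : ℕ → Ω → ℝ) (hmeas : ∀ k, Measurable (τ k))
    (hindep : iIndepFun τ μ)
    (hident : ∀ k, IdentDistrib (τ k) (τ 0) μ μ)
    (hpos : ∀ k, ∀ᵐ ω ∂μ, 0 < τ k ω)
    (p : ℝ) (hp : 0 < p) (hmean : ∫ ω, τ 0 ω ∂μ = 1 / p)
    (hmom : Integrable (fun ω => (τ 0 ω) ^ 4) μ)
    (ε : ℝ) (hε : 0 < ε) :
    (∑' t : ℕ,
        μ {ω | ε ≤
          |((sSup {k : ℕ | 1 ≤ k ∧ ∑ j ∈ Finset.range k, τ j ω ≤ ((t : ℝ) + 1)} : ℕ) : ℝ) /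
              ((t : ℝ) + 1) - p|}) ≠ ⊤ := by
  have hL4 : MemLp (τ 0) 4 μ := by
    simpa using memLp_of_integrable_abs_pow (n := 4) (by norm_num)
      (hmeas 0).aestronglyMeasurable (by simpa [(by decide : Even 4).pow_abs] using hmom)
  obtain ⟨C, hC⟩ :=
    exists_measure_le_abs_renewalCount_div_sub_le hindep hmeas hident hpos hp hmean hL4 hε
  exact ENNReal.tsum_ne_top_of_le_ofReal_div_sq fun t => hC _ (by simp)
end
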